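/- Lipschitz estimate for the regularized function: let K, L > 0 satisfy K·√L ≥ 1. Then for all p₁, p₂, q₁, q₂ ∈ ℝ, |A^δ(p₁,q₁) − A^δ(p₂,q₂)| ≤ K·|p₁ − p₂| + L·|q₁ − q₂|. In particular, A^δ is Lipschitz continuous on ℝ². -/

import Mathlib

/-- The real cube root: `cbrt r = sgn(r) · |r|^{1/3}`. -/
noncomputable def cbrt (r : ℝ) : ℝ := Real.sign r * |r| ^ ((1 : ℝ) / 3)

/-- `A(p,q) = cbrt(p² q)`. -/
noncomputable def Afun (p q : ℝ) : ℝ := cbrt (p ^ 2 * q)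

/-- The regularized function `A^δ(p,q) = sgn(q) · min(|A(p,q)|, K|p|, L|q|)`. -/
noncomputable def Adelta (K L p q : ℝ) : ℝ :=
  Real.sign q * min (|Afun p q|) (min (K * |p|) (L * |q|))

/-!
Writing `a = |p|`, `b = |q|`, we have `A^δ(p,q) = sgn(q) · F(a,b)` with
`F(a,b) = min(a^{2/3} b^{1/3}, K a, L b)`. In each variable separately `F` has the shape
`min(c t^α, M t, const)` with `0 ≤ α ≤ 1`, and `t ↦ min(c t^α, M t)` is `M`-Lipschitz on `[0, ∞)`:
where the power term is the smaller one, `c s^α ≤ M s` bounds its slope `c α s^{α-1}` by `M`.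
The sign factor costs nothing because `0 ≤ F(a,b) ≤ L b`: when `q₁, q₂` do not have the same
strict sign, `|A^δ(p₁,q₁) − A^δ(p₂,q₂)| ≤ L|q₁| + L|q₂| = L|q₁ − q₂|`.
-/

open Real

lemma abs_min_sub_min_le_abs_sub {α : Type*} [AddCommGroup α] [LinearOrder α]
    [IsOrderedAddMonoid α] (x y z : α) : |min x z - min y z| ≤ |x - y| := by
  simpa using abs_min_sub_min_le_max x z y z

lemma abs_sub_eq_abs_add_abs_of_mul_nonpos {α : Type*} [Ring α] [LinearOrder α]
    [IsStrictOrderedRing α] {a b : α} (h : a * b ≤ 0) : |a - b| = |a| + |b| := by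
  rw [sub_eq_add_neg, ← abs_neg b, abs_add_eq_add_abs_iff, neg_nonneg, neg_nonpos]
  exact mul_nonpos_iff.1 h

lemma abs_sign_mul_le (r u : ℝ) : |Real.sign r * u| ≤ |u| := by
  rcases sign_apply_eq r with h | h | h <;> simp [h]

lemma abs_sign_mul_sub_sign_mul_le {L B q₁ q₂ u₁ u₂ : ℝ} (hu₁ : 0 ≤ u₁) (hu₂ : 0 ≤ u₂)
    (hq₁ : u₁ ≤ L * |q₁|) (hq₂ : u₂ ≤ L * |q₂|) (hu : |u₁ - u₂| ≤ B)
    (hq : L * |q₁ - q₂| ≤ B) : |Real.sign q₁ * u₁ - Real.sign q₂ * u₂| ≤ B := by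
  rcases lt_or_ge 0 (q₁ * q₂) with hsame | hopp
  · rcases pos_and_pos_or_neg_and_neg_of_mul_pos hsame with ⟨h₁, h₂⟩ | ⟨h₁, h₂⟩
    · simpa [sign_of_pos h₁, sign_of_pos h₂] using hu
    · rwa [sign_of_neg h₁, sign_of_neg h₂, neg_one_mul, neg_one_mul, neg_sub_neg,
        abs_sub_comm]
  calc |Real.sign q₁ * u₁ - Real.sign q₂ * u₂|
      ≤ |u₁| + |u₂| :=
        (abs_sub _ _).trans (add_le_add (abs_sign_mul_le _ _) (abs_sign_mul_le _ _))
    _ ≤ L * |q₁ - q₂| := by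
        rw [abs_of_nonneg hu₁, abs_of_nonneg hu₂, abs_sub_eq_abs_add_abs_of_mul_nonpos hopp]
        linarith
    _ ≤ B := hq

lemma min_mul_rpow_sub_le {c M α s t : ℝ} (hc : 0 ≤ c) (hα₀ : 0 ≤ α) (hα₁ : α ≤ 1)
    (hs : 0 ≤ s) (hst : s ≤ t) :
    min (c * t ^ α) (M * t) ≤ min (c * s ^ α) (M * s) + M * (t - s) := by
  rcases le_or_gt (M * s) (c * s ^ α) with h | h
  · rw [min_eq_right h]
    linarith [min_le_right (c * t ^ α) (M * t)]
  have hs₀ : 0 < s := hs.lt_of_ne <| by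
    rintro rfl
    linarith [mul_nonneg hc (rpow_nonneg le_rfl α : (0 : ℝ) ≤ 0 ^ α)]
  have hsplit : ∀ u : ℝ, 0 < u → u ^ (1 - α) * u ^ α = u := fun u hu => by
    rw [← rpow_add hu]; simp
  have hsα : 0 < s ^ α := rpow_pos_of_pos hs₀ α
  have hc_le : c ≤ M * s ^ (1 - α) :=
    (lt_of_mul_lt_mul_right (by rwa [mul_assoc, hsplit s hs₀]) hsα.le).le
  have hM : 0 ≤ M := by nlinarith [mul_nonneg hc hsα.le]
  have hpow : s ^ α ≤ t ^ α := rpow_le_rpow hs hst hα₀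
  have hpow' : s ^ (1 - α) ≤ t ^ (1 - α) := rpow_le_rpow hs hst (by linarith)
  rw [min_eq_left h.le]
  calc min (c * t ^ α) (M * t) ≤ c * t ^ α := min_le_left _ _
    _ ≤ c * s ^ α + M * s ^ (1 - α) * (t ^ α - s ^ α) := by
        nlinarith [mul_le_mul_of_nonneg_right hc_le (sub_nonneg.2 hpow)]
    _ ≤ c * s ^ α + M * (t - s) := by
        have := mul_le_mul_of_nonneg_right hpow' (rpow_nonneg (hs.trans hst) α)
        rw [hsplit t (hs₀.trans_le hst)] at this
        nlinarith [hsplit s hs₀]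

lemma abs_min_mul_rpow_sub_le {c M α s t : ℝ} (hc : 0 ≤ c) (hM : 0 ≤ M) (hα₀ : 0 ≤ α)
    (hα₁ : α ≤ 1) (hs : 0 ≤ s) (ht : 0 ≤ t) :
    |min (c * t ^ α) (M * t) - min (c * s ^ α) (M * s)| ≤ M * |t - s| := by
  wlog hst : s ≤ t generalizing s t
  · rw [abs_sub_comm, abs_sub_comm t]
    exact this ht hs (le_of_not_ge hst)
  have hmono : min (c * s ^ α) (M * s) ≤ min (c * t ^ α) (M * t) :=
    min_le_min (mul_le_mul_of_nonneg_left (rpow_le_rpow hs hst hα₀) hc)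
      (mul_le_mul_of_nonneg_left hst hM)
  rw [abs_of_nonneg (sub_nonneg.2 hmono), abs_of_nonneg (sub_nonneg.2 hst)]
  linarith [min_mul_rpow_sub_le (M := M) hc hα₀ hα₁ hs hst]

lemma abs_cbrt (r : ℝ) : |cbrt r| = |r| ^ ((1 : ℝ) / 3) := by
  rw [cbrt, abs_mul, abs_of_nonneg (rpow_nonneg (abs_nonneg r) _)]
  rcases lt_trichotomy r 0 with h | rfl | h
  · simp [sign_of_neg h]
  · simp
  · simp [sign_of_pos h]

lemma abs_Afun (p q : ℝ) : |Afun p q| = |p| ^ ((2 : ℝ) / 3) * |q| ^ ((1 : ℝ) / 3) := by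
  rw [Afun, abs_cbrt, abs_mul, abs_pow, mul_rpow (sq_nonneg _) (abs_nonneg _),
    ← rpow_natCast, ← rpow_mul (abs_nonneg _)]
  norm_num

namespace Adelta

noncomputable def modulus (K L a b : ℝ) : ℝ :=
  min (a ^ ((2 : ℝ) / 3) * b ^ ((1 : ℝ) / 3)) (min (K * a) (L * b))

lemma eq_sign_mul_modulus (K L p q : ℝ) :
    Adelta K L p q = Real.sign q * modulus K L |p| |q| := by
  rw [Adelta, modulus, abs_Afun]

section modulus

variable {K L : ℝ}

lemma modulus_nonneg (hK : 0 ≤ K) (hL : 0 ≤ L) {a b : ℝ} (ha : 0 ≤ a) (hb : 0 ≤ b) :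
    0 ≤ modulus K L a b :=
  le_min (mul_nonneg (rpow_nonneg ha _) (rpow_nonneg hb _))
    (le_min (mul_nonneg hK ha) (mul_nonneg hL hb))

lemma modulus_le (a b : ℝ) : modulus K L a b ≤ L * b :=
  (min_le_right _ _).trans (min_le_right _ _)

lemma abs_modulus_sub_modulus_left_le (hK : 0 ≤ K) {a₁ a₂ b : ℝ} (ha₁ : 0 ≤ a₁) (ha₂ : 0 ≤ a₂)
    (hb : 0 ≤ b) : |modulus K L a₁ b - modulus K L a₂ b| ≤ K * |a₁ - a₂| := by
  have h (a : ℝ) : modulus K L a b =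
      min (min (b ^ ((1 : ℝ) / 3) * a ^ ((2 : ℝ) / 3)) (K * a)) (L * b) := by
    rw [modulus, min_assoc, mul_comm]
  rw [h, h]
  exact (abs_min_sub_min_le_abs_sub _ _ _).trans
    (abs_min_mul_rpow_sub_le (rpow_nonneg hb _) hK (by norm_num) (by norm_num) ha₂ ha₁)

lemma abs_modulus_sub_modulus_right_le (hL : 0 ≤ L) {a b₁ b₂ : ℝ} (ha : 0 ≤ a) (hb₁ : 0 ≤ b₁)
    (hb₂ : 0 ≤ b₂) : |modulus K L a b₁ - modulus K L a b₂| ≤ L * |b₁ - b₂| := by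
  have h (b : ℝ) : modulus K L a b =
      min (min (a ^ ((2 : ℝ) / 3) * b ^ ((1 : ℝ) / 3)) (L * b)) (K * a) := by
    rw [modulus, min_comm (K * a), min_assoc]
  rw [h, h]
  exact (abs_min_sub_min_le_abs_sub _ _ _).trans
    (abs_min_mul_rpow_sub_le (rpow_nonneg ha _) hL (by norm_num) (by norm_num) hb₂ hb₁)

lemma abs_modulus_sub_modulus_le (hK : 0 ≤ K) (hL : 0 ≤ L) {a₁ a₂ b₁ b₂ : ℝ}
    (ha₁ : 0 ≤ a₁) (ha₂ : 0 ≤ a₂) (hb₁ : 0 ≤ b₁) (hb₂ : 0 ≤ b₂) :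
    |modulus K L a₁ b₁ - modulus K L a₂ b₂| ≤ K * |a₁ - a₂| + L * |b₁ - b₂| :=
  (abs_sub_le _ (modulus K L a₂ b₁) _).trans <| add_le_add
    (abs_modulus_sub_modulus_left_le hK ha₁ ha₂ hb₁)
    (abs_modulus_sub_modulus_right_le hL ha₂ hb₁ hb₂)

end modulus

end Adelta

theorem Adelta_lipschitz_general (K L : ℝ) (hK : 0 < K) (hL : 0 < L) :
    (∀ p₁ p₂ q₁ q₂ : ℝ,
      |Adelta K L p₁ q₁ - Adelta K L p₂ q₂| ≤ K * |p₁ - p₂| + L * |q₁ - q₂|) ∧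
    ∃ C : NNReal, LipschitzWith C (fun pq : ℝ × ℝ => Adelta K L pq.1 pq.2) := by
  have hbound (p₁ p₂ q₁ q₂ : ℝ) :
      |Adelta K L p₁ q₁ - Adelta K L p₂ q₂| ≤ K * |p₁ - p₂| + L * |q₁ - q₂| := by
    rw [Adelta.eq_sign_mul_modulus, Adelta.eq_sign_mul_modulus]
    have hmod (p q : ℝ) := Adelta.modulus_nonneg hK.le hL.le (abs_nonneg p) (abs_nonneg q)
    refine abs_sign_mul_sub_sign_mul_le (hmod p₁ q₁) (hmod p₂ q₂) (Adelta.modulus_le ..)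
      (Adelta.modulus_le ..) ?_ (le_add_of_nonneg_left (by positivity))
    refine (Adelta.abs_modulus_sub_modulus_le hK.le hL.le (abs_nonneg _) (abs_nonneg _)
      (abs_nonneg _) (abs_nonneg _)).trans ?_
    exact add_le_add (mul_le_mul_of_nonneg_left (abs_abs_sub_abs_le_abs_sub _ _) hK.le)
      (mul_le_mul_of_nonneg_left (abs_abs_sub_abs_le_abs_sub _ _) hL.le)
  refine ⟨hbound, _, LipschitzWith.uncurry (f := Adelta K L) (Kα := K.toNNReal)
    (Kβ := L.toNNReal) (fun q => ?_) (fun p => ?_)⟩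
  · exact LipschitzWith.of_dist_le' fun p₁ p₂ => by
      simpa [Real.dist_eq] using hbound p₁ p₂ q q
  · exact LipschitzWith.of_dist_le' fun q₁ q₂ => by
      simpa [Real.dist_eq] using hbound p p q₁ q₂

/-- Lipschitz estimate for the regularized function: for `K√L ≥ 1`,
`|A^δ(p₁,q₁) − A^δ(p₂,q₂)| ≤ K|p₁−p₂| + L|q₁−q₂|`; in particular `A^δ` is Lipschitz
continuous on `ℝ²`. -/
theorem Adelta_lipschitz (K L : ℝ) (hK : 0 < K) (hL : 0 < L)
    (h1 : 1 ≤ K * Real.sqrt L) :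
    (∀ p₁ p₂ q₁ q₂ : ℝ,
      |Adelta K L p₁ q₁ - Adelta K L p₂ q₂| ≤ K * |p₁ - p₂| + L * |q₁ - q₂|) ∧
    ∃ C : NNReal, LipschitzWith C (fun pq : ℝ × ℝ => Adelta K L pq.1 pq.2) :=
  Adelta_lipschitz_general K L hK hL
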